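/- Let L ≥ 3 and consider the Ising Hamiltonian with field V = S¹_1 + S³_2, i.e., H_V = H^Ising + S¹_1 + S³_2 on ℋ_L. Let ψ_{[1,2]} ∈ ℂ²⊗ℂ² be a ground state of the two-site operator h^Ising_{1,2} + S¹_1 + S³_2 with lowest eigenvalue E, and suppose ψ_{[1,2]} lies in the span of |↑↓⟩ and |↓↓⟩ (i.e., it has spin down at site 2). Then for every k ∈ {0,…,L−2} the vector ψ_{[1,2]} ⊗ |↓⟩^{⊗k} ⊗ |↑⟩^{⊗(L−2−k)} is an eigenvector of H_V with eigenvalue E, the lowest eigenvalue of H_V equals E, and these L−1 vectors are linearly independent; hence the ground-state eigenspace of H_V has dimension at least L−1. -/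

import Mathlib

open Matrix Finset
open scoped ComplexOrder

noncomputable section

/-- Configuration space of a chain of `L` spins-1/2: `ℋ_L = ⊗_{x=1}^L ℂ²`
is identified with functions `Conf L → ℂ`. Value `0` is spin up `|↑⟩`,
value `1` is spin down `|↓⟩`. -/
abbrev Conf (L : ℕ) := Fin L → Fin 2

def S1 : Matrix (Fin 2) (Fin 2) ℂ := !![0, 1/2; 1/2, 0]
def S2 : Matrix (Fin 2) (Fin 2) ℂ := !![0, -Complex.I/2; Complex.I/2, 0]
def S3 : Matrix (Fin 2) (Fin 2) ℂ := !![1/2, 0; 0, -1/2]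

/-- The one-site operator `A` acting on the `x`-th (0-based) tensor factor of `ℋ_L`. -/
def siteOp (L : ℕ) (A : Matrix (Fin 2) (Fin 2) ℂ) (x : ℕ) :
    Matrix (Conf L) (Conf L) ℂ :=
  fun m n =>
    if hx : x < L then
      A (m ⟨x, hx⟩) (n ⟨x, hx⟩) *
        ∏ y ∈ Finset.univ.erase (⟨x, hx⟩ : Fin L), (if m y = n y then 1 else 0)
    else 0

/-- The Ising bond interaction `h^Ising_{x,x+1}` (with `x` 0-based). -/
def hIsing (L : ℕ) (x : ℕ) : Matrix (Conf L) (Conf L) ℂ :=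
  -(siteOp L S3 x * siteOp L S3 (x + 1))
    + ((1 / 2 : ℝ) : ℂ) • (siteOp L S3 x - siteOp L S3 (x + 1))
    + ((1 / 4 : ℝ) : ℂ) • 1

/-- The Ising kink Hamiltonian `H^Ising = ∑_{x=1}^{L-1} h^Ising_{x,x+1}`. -/
def HIsing (L : ℕ) : Matrix (Conf L) (Conf L) ℂ :=
  ∑ x ∈ Finset.range (L - 1), hIsing L x

/-- The set of (real) eigenvalues of a matrix. -/
def eigSet {n : Type*} [Fintype n] [DecidableEq n] (H : Matrix n n ℂ) : Set ℝ :=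
  {μ : ℝ | ∃ ψ : n → ℂ, ψ ≠ 0 ∧ H.mulVec ψ = (μ : ℂ) • ψ}

/-- Euclidean norm of `𝐁(x) ∈ ℝ³`. -/
def bnorm (b : Fin 3 → ℝ) : ℝ := Real.sqrt (b 0 ^ 2 + b 1 ^ 2 + b 2 ^ 2)

/-- The magnetic field term `𝐁(x)·𝐒_x` at (0-based) site `x`. -/
def fieldOp (L : ℕ) (b : Fin 3 → ℝ) (x : ℕ) : Matrix (Conf L) (Conf L) ℂ :=
  (b 0 : ℂ) • siteOp L S1 x + (b 1 : ℂ) • siteOp L S2 x + (b 2 : ℂ) • siteOp L S3 x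

/-- The vector `ψ_{[1,2]} ⊗ |↓⟩^{⊗k} ⊗ |↑⟩^{⊗(L−2−k)}` on the chain of length `L`:
the two-site state `ψ` on sites `1,2` (0-based `0,1`), spin down on the next `k`
sites, spin up on the rest. -/
def embedTwo (L : ℕ) (hL : 2 ≤ L) (ψ : Conf 2 → ℂ) (k : ℕ) : Conf L → ℂ :=
  fun m => ψ (fun i => m (Fin.castLE hL i)) *
    ∏ x : Fin L,
      if 2 ≤ x.1 then
        (if x.1 < 2 + k then (if m x = 1 then 1 else 0) else (if m x = 0 then 1 else 0))
      else 1

/-! `H^Ising` is diagonal in the spin basis, where it counts the kinks `↑↓`, and so is `S³_2`;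
only `S¹_1` flips a spin, the one on site 1. On a configuration underlying
`ψ_{[1,2]} ⊗ |↓⟩^{⊗k} ⊗ |↑⟩^{⊗(L−2−k)}` with site 2 down, the only possible kink is on the bond
`(1, 2)`, so `H_V` acts there as the two-site operator and the vector is an eigenvector with
eigenvalue `E`. Conversely, for fixed spins on sites `3, …, L`, `H_V` acts on the remaining two
spins as the two-site operator plus a nonnegative diagonal, so every eigenvalue of `H_V` is at
least `E`. The `L − 1` vectors are linearly independent because their supports are disjoint. -/

open Function

section SiteOperators

variable {L x : ℕ}

theorem siteOp_mulVec_apply (hx : x < L) (A : Matrix (Fin 2) (Fin 2) ℂ) (f : Conf L → ℂ)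
    (m : Conf L) :
    (siteOp L A x *ᵥ f) m = ∑ b, A (m ⟨x, hx⟩) b * f (update m ⟨x, hx⟩ b) := by
  set i : Fin L := ⟨x, hx⟩
  simp only [mulVec, dotProduct, siteOp, dif_pos hx]
  rw [← Finset.sum_fiberwise Finset.univ (fun n : Conf L => n i)]
  refine Finset.sum_congr rfl fun b _ => ?_
  rw [Finset.sum_eq_single_of_mem (update m i b) (by simp)]
  · rw [Finset.prod_eq_one fun y hy => if_pos (update_of_ne (Finset.ne_of_mem_erase hy) _ _).symm,
      update_self, mul_one]
  · intro n hn hne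
    obtain ⟨y, hy⟩ := Function.ne_iff.mp hne
    have hyi : y ≠ i := by
      rintro rfl
      exact hy (by simpa using hn)
    rw [update_of_ne hyi] at hy
    rw [Finset.prod_eq_zero (Finset.mem_erase.2 ⟨hyi, Finset.mem_univ y⟩) (if_neg (Ne.symm hy)),
      mul_zero, zero_mul]

theorem siteOp_isHermitian {A : Matrix (Fin 2) (Fin 2) ℂ} (hA : A.IsHermitian) (L x : ℕ) :
    (siteOp L A x).IsHermitian := by
  ext m n
  simp only [conjTranspose_apply, siteOp]
  split_ifs
  · rw [star_mul', hA.apply, star_prod]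
    congr 1
    refine Finset.prod_congr rfl fun y _ => ?_
    simp only [eq_comm (a := n y)]
    split_ifs <;> simp
  · simp

theorem S1_isHermitian : S1.IsHermitian := by
  ext i j; fin_cases i <;> fin_cases j <;> simp [S1]

theorem S3_isHermitian : S3.IsHermitian := by
  ext i j; fin_cases i <;> fin_cases j <;> simp [S3]

def flipAt (i : Fin L) (m : Conf L) : Conf L := update m i (m i).rev

theorem flipAt_apply_of_ne {i y : Fin L} (h : y ≠ i) (m : Conf L) : flipAt i m y = m y :=
  update_of_ne h _ _

theorem siteOp_S1_mulVec_apply (hx : x < L) (f : Conf L → ℂ) (m : Conf L) :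
    (siteOp L S1 x *ᵥ f) m = 1 / 2 * f (flipAt ⟨x, hx⟩ m) := by
  have hS1 : ∀ a b : Fin 2, S1 a b = if b = a.rev then 1 / 2 else 0 := by
    intro a b; fin_cases a <;> fin_cases b <;> simp [S1]
  simp [siteOp_mulVec_apply hx, hS1, flipAt]

theorem siteOp_S3_mulVec_apply (hx : x < L) (f : Conf L → ℂ) (m : Conf L) :
    (siteOp L S3 x *ᵥ f) m = S3 (m ⟨x, hx⟩) (m ⟨x, hx⟩) * f m := by
  have hS3 : ∀ a b : Fin 2, b ≠ a → S3 a b = 0 := by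
    intro a b; fin_cases a <;> fin_cases b <;> simp [S3]
  rw [siteOp_mulVec_apply hx, Finset.sum_eq_single (m ⟨x, hx⟩) (fun b _ hb => by
    rw [hS3 _ _ hb, zero_mul]) (by simp), update_eq_self]

end SiteOperators

section IsingEnergy

variable {L : ℕ}

def bondEnergy (a b : Fin 2) : ℝ := if a = 0 ∧ b = 1 then 1 else 0

def bondEnergyAt (m : Conf L) (x : ℕ) : ℝ :=
  if h : x + 1 < L then bondEnergy (m ⟨x, by omega⟩) (m ⟨x + 1, h⟩) else 0

def isingEnergy (m : Conf L) : ℝ := ∑ x ∈ Finset.range (L - 1), bondEnergyAt m x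

theorem bondEnergyAt_nonneg (m : Conf L) (x : ℕ) : 0 ≤ bondEnergyAt m x := by
  unfold bondEnergyAt bondEnergy
  split_ifs <;> norm_num

theorem hIsing_mulVec_apply {x : ℕ} (hx : x + 1 < L) (f : Conf L → ℂ) (m : Conf L) :
    (hIsing L x *ᵥ f) m = bondEnergy (m ⟨x, by omega⟩) (m ⟨x + 1, hx⟩) * f m := by
  have hS3 : ∀ y (hy : y < L) (g : Conf L → ℂ),
      siteOp L S3 y *ᵥ g = fun m => S3 (m ⟨y, hy⟩) (m ⟨y, hy⟩) * g m :=
    fun y hy g => funext (siteOp_S3_mulVec_apply hy g)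
  simp only [hIsing, add_mulVec, neg_mulVec, smul_mulVec, sub_mulVec, one_mulVec,
    ← mulVec_mulVec, hS3 x (by omega), hS3 (x + 1) hx, Pi.add_apply, Pi.neg_apply,
    Pi.smul_apply, Pi.sub_apply, smul_eq_mul]
  generalize m ⟨x, _⟩ = a
  generalize m ⟨x + 1, hx⟩ = b
  fin_cases a <;> fin_cases b <;> simp [S3, bondEnergy] <;> ring

theorem HIsing_eq_diagonal : HIsing L = diagonal fun m => (isingEnergy m : ℂ) := by
  refine ext_of_mulVec_single fun n => funext fun m => ?_
  rw [mulVec_diagonal, HIsing, sum_mulVec, Finset.sum_apply, isingEnergy, Complex.ofReal_sum,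
    Finset.sum_mul]
  refine Finset.sum_congr rfl fun x hx => ?_
  have hx' : x + 1 < L := by
    rw [Finset.mem_range] at hx
    omega
  rw [hIsing_mulVec_apply hx', bondEnergyAt, dif_pos hx']

theorem HIsing_two : HIsing 2 = hIsing 2 0 := Finset.sum_range_one _

theorem HIsing_isHermitian : (HIsing L).IsHermitian := by
  rw [HIsing_eq_diagonal]
  exact isHermitian_diagonal_of_self_adjoint _ (funext fun m => Complex.conj_ofReal _)

theorem isingEnergy_eq_castLE_add {n : ℕ} (h : n ≤ L) (m : Conf L) :
    isingEnergy m = isingEnergy (fun i : Fin n => m (Fin.castLE h i)) +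
      ∑ x ∈ Finset.Ico (n - 1) (L - 1), bondEnergyAt m x := by
  rw [isingEnergy, isingEnergy, ← Finset.sum_range_add_sum_Ico _ (by omega : n - 1 ≤ L - 1)]
  congr 1
  refine Finset.sum_congr rfl fun x hx => ?_
  have hx' : x + 1 < n := by
    rw [Finset.mem_range] at hx
    omega
  simp [bondEnergyAt, hx', show x + 1 < L by omega]

theorem isingEnergy_castLE_le {n : ℕ} (h : n ≤ L) (m : Conf L) :
    isingEnergy (fun i : Fin n => m (Fin.castLE h i)) ≤ isingEnergy m := by
  rw [isingEnergy_eq_castLE_add h m]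
  exact le_add_of_nonneg_right (Finset.sum_nonneg fun x _ => bondEnergyAt_nonneg m x)

end IsingEnergy

/-- `H_V = H^Ising + S¹_1 + S³_2`; the paper's sites `1, 2` are the sites `0, 1` here. -/
def HV (L : ℕ) : Matrix (Conf L) (Conf L) ℂ := HIsing L + siteOp L S1 0 + siteOp L S3 1

theorem HV_isHermitian (L : ℕ) : (HV L).IsHermitian :=
  (HIsing_isHermitian.add (siteOp_isHermitian S1_isHermitian L 0)).add
    (siteOp_isHermitian S3_isHermitian L 1)

theorem HV_mulVec_apply {L : ℕ} (hL : 2 ≤ L) (f : Conf L → ℂ) (m : Conf L) :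
    (HV L *ᵥ f) m = (isingEnergy m + S3 (m ⟨1, by omega⟩) (m ⟨1, by omega⟩)) * f m
      + 1 / 2 * f (flipAt ⟨0, by omega⟩ m) := by
  rw [HV, add_mulVec, add_mulVec, Pi.add_apply, Pi.add_apply, HIsing_eq_diagonal,
    mulVec_diagonal, siteOp_S1_mulVec_apply (by omega), siteOp_S3_mulVec_apply (by omega)]
  ring

open scoped MatrixOrder Matrix.Norms.L2Operator in
theorem mul_dotProduct_le_of_mem_lowerBounds_eigSet {n : Type*} [Fintype n] [DecidableEq n]
    {A : Matrix n n ℂ} (hA : A.IsHermitian) {E : ℝ} (hE : E ∈ lowerBounds (eigSet A))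
    (g : n → ℂ) : (E : ℂ) * (star g ⬝ᵥ g) ≤ star g ⬝ᵥ (A *ᵥ g) := by
  have hspec : ∀ μ ∈ spectrum ℝ A, E ≤ μ := by
    rw [hA.spectrum_real_eq_range_eigenvalues]
    rintro _ ⟨i, rfl⟩
    refine hE ⟨_, ?_, (hA.mulVec_eigenvectorBasis i).trans ?_⟩
    · simpa using hA.eigenvectorBasis.orthonormal.ne_zero i
    · exact (RCLike.real_smul_eq_coe_smul _ _)
  have hpsd : (A - (E : ℂ) • 1).PosSemidef := by
    simpa [Matrix.le_iff, Algebra.algebraMap_eq_smul_one] using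
      (algebraMap_le_iff_le_spectrum (a := A) (r := E) hA.isSelfAdjoint).2 hspec
  have := hpsd.dotProduct_mulVec_nonneg g
  rwa [sub_mulVec, smul_mulVec, one_mulVec, dotProduct_sub, dotProduct_smul, smul_eq_mul,
    sub_nonneg] at this

section Configurations

variable {L : ℕ}

def glueHead (m₀ : Conf L) (w : Conf 2) : Conf L :=
  fun y => if h : y.1 < 2 then w ⟨y, h⟩ else m₀ y

theorem glueHead_castLE (hL : 2 ≤ L) (m₀ : Conf L) (w : Conf 2) :
    (fun i : Fin 2 => glueHead m₀ w (Fin.castLE hL i)) = w := by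
  funext i
  exact dif_pos i.isLt

theorem glueHead_self (hL : 2 ≤ L) (m₀ : Conf L) :
    glueHead m₀ (fun i : Fin 2 => m₀ (Fin.castLE hL i)) = m₀ := by
  funext y
  unfold glueHead
  split_ifs <;> rfl

theorem flipAt_glueHead (hL : 2 ≤ L) (m₀ : Conf L) (w : Conf 2) :
    flipAt ⟨0, by omega⟩ (glueHead m₀ w) = glueHead m₀ (flipAt ⟨0, two_pos⟩ w) := by
  funext y
  rcases y with ⟨_ | _ | y, hy⟩ <;> simp [flipAt, glueHead]

theorem castLE_flipAt (hL : 2 ≤ L) (m : Conf L) :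
    (fun i : Fin 2 => flipAt ⟨0, by omega⟩ m (Fin.castLE hL i)) =
      flipAt 0 (fun i => m (Fin.castLE hL i)) := by
  funext i
  fin_cases i <;> simp [flipAt, Fin.castLE, Fin.ext_iff]

/-- Spin down on the sites `< 2 + k` and up beyond: on sites `2, …, L-1` this is the tail
`|↓⟩^{⊗k} ⊗ |↑⟩^{⊗(L−2−k)}`; its values on sites `0, 1` play no role. -/
def downUpConf (L k : ℕ) : Conf L := fun y => if y.1 < 2 + k then 1 else 0

def HasTail (k : ℕ) (m : Conf L) : Prop := ∀ y : Fin L, 2 ≤ y.1 → m y = downUpConf L k y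

theorem hasTail_congr {k : ℕ} {m m' : Conf L} (h : ∀ y : Fin L, 2 ≤ y.1 → m y = m' y) :
    HasTail k m ↔ HasTail k m' :=
  forall₂_congr fun y hy => by rw [h y hy]

theorem hasTail_flipAt {k : ℕ} (hL : 2 ≤ L) (m : Conf L) :
    HasTail k (flipAt ⟨0, by omega⟩ m) ↔ HasTail k m :=
  hasTail_congr fun y hy => flipAt_apply_of_ne (fun h => by simp [h] at hy) m

theorem hasTail_glueHead {k : ℕ} (m₀ : Conf L) (w : Conf 2) :
    HasTail k (glueHead m₀ w) ↔ HasTail k m₀ :=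
  hasTail_congr fun y hy => dif_neg (by omega)

theorem hasTail_downUpConf_iff {k j : ℕ} (hk : k ≤ L - 2) (hj : j ≤ L - 2) :
    HasTail k (downUpConf L j) ↔ k = j := by
  refine ⟨fun h => ?_, fun h y _ => h ▸ rfl⟩
  by_contra hkj
  have := h ⟨2 + min k j, by omega⟩ (by simp)
  simp only [downUpConf] at this
  split_ifs at this <;> omega

theorem embedTwo_of_hasTail (hL : 2 ≤ L) (ψ : Conf 2 → ℂ) {k : ℕ} {m : Conf L}
    (hm : HasTail k m) : embedTwo L hL ψ k m = ψ (fun i => m (Fin.castLE hL i)) := by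
  rw [embedTwo, Finset.prod_eq_one fun y _ => ?_, mul_one]
  by_cases hy : 2 ≤ y.1
  · by_cases hk : y.1 < 2 + k <;> simp [hy, hm y hy, downUpConf, hk]
  · rw [if_neg hy]

theorem embedTwo_of_not_hasTail (hL : 2 ≤ L) (ψ : Conf 2 → ℂ) {k : ℕ} {m : Conf L}
    (hm : ¬ HasTail k m) : embedTwo L hL ψ k m = 0 := by
  simp only [HasTail, not_forall] at hm
  obtain ⟨y, hy, hmy⟩ := hm
  rw [embedTwo, Finset.prod_eq_zero (Finset.mem_univ y), mul_zero]
  simp only [downUpConf] at hmy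
  split_ifs at hmy ⊢ <;> simp_all

theorem embedTwo_glueHead_downUpConf (hL : 2 ≤ L) (ψ : Conf 2 → ℂ) (k : ℕ) (w : Conf 2) :
    embedTwo L hL ψ k (glueHead (downUpConf L k) w) = ψ w := by
  rw [embedTwo_of_hasTail hL ψ ((hasTail_glueHead _ w).2 fun _ _ => rfl), glueHead_castLE]

theorem isingEnergy_eq_castLE_of_hasTail (hL : 2 ≤ L) {k : ℕ} {m : Conf L} (hm : HasTail k m)
    (h1 : m ⟨1, by omega⟩ = 1) :
    isingEnergy m = isingEnergy (fun i : Fin 2 => m (Fin.castLE hL i)) := by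
  rw [isingEnergy_eq_castLE_add hL, Finset.sum_eq_zero, add_zero]
  intro x hx
  rw [Finset.mem_Ico] at hx
  have hx1 : x + 1 < L := by omega
  -- every spin on sites `1, …, 1 + k` is down and every later spin is up, so no bond is a kink
  have hno_kink : m ⟨x, by omega⟩ = 1 ∨ m ⟨x + 1, hx1⟩ = 0 := by
    have hnext := hm ⟨x + 1, hx1⟩ (by simp; omega)
    by_cases hxk : x + 1 < 2 + k
    · left
      rcases Nat.lt_or_ge x 2 with hx2 | hx2
      · obtain rfl : x = 1 := by omega
        exact h1
      · simpa [downUpConf, hxk.trans' (Nat.lt_succ_self x)] using hm ⟨x, by omega⟩ hx2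
    · right
      simpa [downUpConf, hxk] using hnext
  rcases hno_kink with h | h <;> simp [bondEnergyAt, bondEnergy, hx1, h]

end Configurations

section GroundStates

variable {L : ℕ} {ψ : Conf 2 → ℂ} {E : ℝ}

theorem HV_mulVec_embedTwo (hL : 2 ≤ L) (heig : HV 2 *ᵥ ψ = (E : ℂ) • ψ)
    (hdown : ∀ w : Conf 2, w 1 = 0 → ψ w = 0) (k : ℕ) :
    HV L *ᵥ embedTwo L hL ψ k = (E : ℂ) • embedTwo L hL ψ k := by
  funext m
  rw [HV_mulVec_apply hL, Pi.smul_apply, smul_eq_mul]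
  by_cases hm : HasTail k m
  · rw [embedTwo_of_hasTail hL ψ hm, embedTwo_of_hasTail hL ψ ((hasTail_flipAt hL m).2 hm),
      castLE_flipAt]
    set w : Conf 2 := fun i => m (Fin.castLE hL i)
    by_cases h1 : w 1 = 0
    · rw [hdown w h1, hdown _ ((flipAt_apply_of_ne (by decide) w).trans h1)]
      simp
    · rw [isingEnergy_eq_castLE_of_hasTail hL hm (Fin.eq_one_of_ne_zero _ h1)]
      have hw := congrFun heig w
      rw [HV_mulVec_apply le_rfl] at hw
      exact hw
  · rw [embedTwo_of_not_hasTail hL ψ hm,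
      embedTwo_of_not_hasTail hL ψ (mt (hasTail_flipAt hL m).1 hm)]
    simp

theorem embedTwo_ne_zero (hL : 2 ≤ L) (hψ : ψ ≠ 0) (k : ℕ) : embedTwo L hL ψ k ≠ 0 := by
  obtain ⟨w, hw⟩ := Function.ne_iff.mp hψ
  exact Function.ne_iff.mpr ⟨glueHead (downUpConf L k) w, by rwa [embedTwo_glueHead_downUpConf]⟩

theorem mem_lowerBounds_eigSet_HV (hL : 2 ≤ L) (hE : E ∈ lowerBounds (eigSet (HV 2))) :
    E ∈ lowerBounds (eigSet (HV L)) := by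
  rintro μ ⟨f, hf, hμ⟩
  obtain ⟨m₀, hm₀⟩ := Function.ne_iff.mp hf
  -- On the configurations agreeing with `m₀` off the sites `0, 1`, `H_V` acts as `H_V` of the
  -- two-site chain plus the nonnegative diagonal `D`.
  set g : Conf 2 → ℂ := fun w => f (glueHead m₀ w)
  set D : Conf 2 → ℝ := fun w => isingEnergy (glueHead m₀ w) - isingEnergy w
  have hg : g ≠ 0 :=
    Function.ne_iff.mpr ⟨fun i => m₀ (Fin.castLE hL i), by simpa [g, glueHead_self] using hm₀⟩
  have hD : ∀ w, 0 ≤ D w := fun w => sub_nonneg.2 <| by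
    simpa [glueHead_castLE] using isingEnergy_castLE_le hL (glueHead m₀ w)
  have hfiber : (μ : ℂ) • g = HV 2 *ᵥ g + fun w => (D w : ℂ) * g w := by
    funext w
    have hw := congrFun hμ (glueHead m₀ w)
    have hw1 : glueHead m₀ w ⟨1, by omega⟩ = w ⟨1, one_lt_two⟩ := dif_pos one_lt_two
    rw [HV_mulVec_apply hL, flipAt_glueHead hL, hw1, Pi.smul_apply, smul_eq_mul] at hw
    rw [Pi.add_apply, HV_mulVec_apply le_rfl, Pi.smul_apply, smul_eq_mul, ← hw,
      Complex.ofReal_sub]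
    ring
  have hkey : (E : ℂ) * (star g ⬝ᵥ g) ≤ μ * (star g ⬝ᵥ g) :=
    calc (E : ℂ) * (star g ⬝ᵥ g)
        ≤ star g ⬝ᵥ (HV 2 *ᵥ g) :=
          mul_dotProduct_le_of_mem_lowerBounds_eigSet (HV_isHermitian 2) hE g
      _ ≤ star g ⬝ᵥ (HV 2 *ᵥ g) + star g ⬝ᵥ fun w => (D w : ℂ) * g w := by
          refine le_add_of_nonneg_right (Finset.sum_nonneg fun w _ => ?_)
          rw [Pi.star_apply, mul_left_comm]
          exact mul_nonneg (by exact_mod_cast hD w) (star_mul_self_nonneg _)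
      _ = μ * (star g ⬝ᵥ g) := by rw [← dotProduct_add, ← hfiber, dotProduct_smul, smul_eq_mul]
  exact_mod_cast le_of_mul_le_mul_right hkey (dotProduct_star_self_pos_iff.2 hg)

theorem linearIndependent_embedTwo (hL : 2 ≤ L) (hψ : ψ ≠ 0) :
    LinearIndependent ℂ fun k : Fin (L - 1) => embedTwo L hL ψ k := by
  obtain ⟨w, hw⟩ := Function.ne_iff.mp hψ
  refine Fintype.linearIndependent_iff.2 fun c hc j => ?_
  have heval : ∀ k : Fin (L - 1),
      embedTwo L hL ψ k (glueHead (downUpConf L j) w) = if k = j then ψ w else 0 := by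
    intro k
    split_ifs with hkj
    · rw [hkj, embedTwo_glueHead_downUpConf]
    · refine embedTwo_of_not_hasTail hL ψ ?_
      rw [hasTail_glueHead, hasTail_downUpConf_iff (by omega) (by omega)]
      exact fun h => hkj (Fin.ext h)
  have hj := congrFun hc (glueHead (downUpConf L j) w)
  simp only [Finset.sum_apply, Pi.smul_apply, smul_eq_mul, heval, mul_ite, mul_zero,
    Finset.sum_ite_eq', Finset.mem_univ, if_true, Pi.zero_apply] at hj
  exact (mul_eq_zero.mp hj).resolve_right hw

end GroundStates

/-- for the Ising Hamiltonian with field `V = S¹_1 + S³_2`, every vector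
`ψ_{[1,2]} ⊗ |↓⟩^{⊗k} ⊗ |↑⟩^{⊗(L−2−k)}`, `k = 0,…,L−2`, built from a two-site ground
state `ψ_{[1,2]}` with spin down at site 2, is an eigenvector of `H_V` with the
two-site ground state energy `E`; `E` is the lowest eigenvalue of `H_V`, and these
`L−1` vectors are linearly independent, so the ground-state eigenspace has dimension
at least `L−1`. -/
theorem ising_degenerate_ground_states
    (L : ℕ) (hL : 3 ≤ L)
    (ψ : Conf 2 → ℂ) (E : ℝ)
    (hψ0 : ψ ≠ 0)
    (heig : (hIsing 2 0 + siteOp 2 S1 0 + siteOp 2 S3 1).mulVec ψ = (E : ℂ) • ψ)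
    (hleast : IsLeast (eigSet (hIsing 2 0 + siteOp 2 S1 0 + siteOp 2 S3 1)) E)
    (hdown : ∀ m : Conf 2, m 1 = 0 → ψ m = 0) :
    (∀ k : ℕ, k ≤ L - 2 →
      (HIsing L + siteOp L S1 0 + siteOp L S3 1).mulVec
          (embedTwo L (by omega) ψ k) = (E : ℂ) • embedTwo L (by omega) ψ k) ∧
    IsLeast (eigSet (HIsing L + siteOp L S1 0 + siteOp L S3 1)) E ∧
    LinearIndependent ℂ (fun k : Fin (L - 1) => embedTwo L (by omega) ψ k.1) ∧
    L - 1 ≤ Module.finrank ℂ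
      (Module.End.eigenspace
        (Matrix.mulVecLin (HIsing L + siteOp L S1 0 + siteOp L S3 1)) ((E : ℝ) : ℂ)) := by
  have hL2 : 2 ≤ L := by omega
  rw [← HIsing_two] at heig hleast
  have heigk : ∀ k, HV L *ᵥ embedTwo L hL2 ψ k = (E : ℂ) • embedTwo L hL2 ψ k :=
    HV_mulVec_embedTwo hL2 heig hdown
  have hli := linearIndependent_embedTwo hL2 hψ0
  refine ⟨fun k _ => heigk k,
    ⟨⟨_, embedTwo_ne_zero hL2 hψ0 0, heigk 0⟩, mem_lowerBounds_eigSet_HV hL2 hleast.2⟩, hli, ?_⟩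
  calc L - 1 = Module.finrank ℂ (Submodule.span ℂ (Set.range fun k : Fin (L - 1) =>
        embedTwo L hL2 ψ k)) := by rw [finrank_span_eq_card hli, Fintype.card_fin]
    _ ≤ _ := Submodule.finrank_mono <| Submodule.span_le.2 <| Set.range_subset_iff.2 fun k =>
        Module.End.mem_eigenspace_iff.2 (heigk k)
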